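/- Let ψ : M → ℝ be a smooth function on a complex manifold such that both i∂∂̄ψ ≥ C i∂ψ∧∂̄ψ and ψ is bounded: |ψ(x) - ψ(x₀)| < c₀ on a subset U ∋ x₀. Then the function λ = -exp(-(C/2)(ψ - ψ(x₀))) satisfies -e^{C c₀/2} < λ < 0 on U and i∂∂̄λ ≥ (C e^{-C c₀/2}/4) i∂∂̄ψ on U. -/

import Mathlib

open Complex

/-- The Levi form of a real-valued function `f` at `x` in direction `v`. -/
noncomputable def levi {E : Type*} [NormedAddCommGroup E] [NormedSpace ℂ E]
    (f : E → ℝ) (x v : E) : ℝ :=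
  (fderiv ℝ (fun y => fderiv ℝ f y v) x v +
    fderiv ℝ (fun y => fderiv ℝ f y (Complex.I • v)) x (Complex.I • v)) / 4

/-- The (1,0)-part of the differential. -/
noncomputable def delOne {E : Type*} [NormedAddCommGroup E] [NormedSpace ℂ E]
    (f : E → ℝ) (x v : E) : ℂ :=
  (((fderiv ℝ f x v : ℝ) : ℂ) - Complex.I * ((fderiv ℝ f x (Complex.I • v) : ℝ) : ℂ)) / 2

lemma norm_delOne_sq {E : Type*} [NormedAddCommGroup E] [NormedSpace ℂ E]
    (ψ : E → ℝ) (x v : E) :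
    ‖delOne ψ x v‖ ^ 2 =
      ((fderiv ℝ ψ x v) ^ 2 + (fderiv ℝ ψ x (Complex.I • v)) ^ 2) / 4 := by
  rw [delOne, Complex.sq_norm, Complex.normSq_apply]
  simp
  ring

lemma hasFDerivAt_lamAux {E : Type*} [NormedAddCommGroup E] [NormedSpace ℝ E]
    (ψ : E → ℝ) (hψ : ContDiff ℝ (⊤ : ℕ∞) ψ) (a k : ℝ) (x : E) :
    HasFDerivAt (fun y => -Real.exp (a * (ψ y - k)))
      ((-(Real.exp (a * (ψ x - k)) * a)) • fderiv ℝ ψ x) x := by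
  have h1 := (hψ.differentiable (by simp) x).hasFDerivAt
  have h2 : HasFDerivAt (fun y => a * (ψ y - k)) (a • fderiv ℝ ψ x) x :=
    (h1.sub_const k).const_mul a
  have h4 : HasFDerivAt (fun y => -Real.exp (a * (ψ y - k)))
      (-(Real.exp (a * (ψ x - k)) • a • fderiv ℝ ψ x)) x := h2.exp.neg
  convert h4 using 1
  ext w
  simp [smul_smul]

lemma secondDeriv_lamAux {E : Type*} [NormedAddCommGroup E] [NormedSpace ℝ E]
    (ψ : E → ℝ) (hψ : ContDiff ℝ (⊤ : ℕ∞) ψ) (a k : ℝ) (x v : E) :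
    fderiv ℝ (fun y => fderiv ℝ (fun z => -Real.exp (a * (ψ z - k))) y v) x v =
      -(Real.exp (a * (ψ x - k)) * a) * fderiv ℝ (fun y => fderiv ℝ ψ y v) x v
      - Real.exp (a * (ψ x - k)) * a ^ 2 * (fderiv ℝ ψ x v) ^ 2 := by
  have key : (fun y => fderiv ℝ (fun z => -Real.exp (a * (ψ z - k))) y v)
      = fun y => (-Real.exp (a * (ψ y - k)) * a) * (fderiv ℝ ψ y v) := by
    funext y
    rw [(hasFDerivAt_lamAux ψ hψ a k y).fderiv]
    simp
  rw [key]
  have hg : ContDiff ℝ (⊤ : ℕ∞) (fun y => fderiv ℝ ψ y v) :=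
    (hψ.fderiv_right (by simp)).clm_apply contDiff_const
  have hgd : HasFDerivAt (fun y => fderiv ℝ ψ y v)
      (fderiv ℝ (fun y => fderiv ℝ ψ y v) x) x :=
    (hg.differentiable (by simp) x).hasFDerivAt
  have hf : HasFDerivAt (fun y => -Real.exp (a * (ψ y - k)) * a)
      (a • ((-(Real.exp (a * (ψ x - k)) * a)) • fderiv ℝ ψ x)) x :=
    (hasFDerivAt_lamAux ψ hψ a k x).mul_const a
  have : fderiv ℝ (fun y => -Real.exp (a * (ψ y - k)) * a * fderiv ℝ ψ y v) x = _ :=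
    (hf.mul hgd).fderiv
  rw [this]
  simp [smul_smul]
  ring

/-- If `i∂∂̄ψ ≥ C i∂ψ∧∂̄ψ` and `|ψ - ψ(x₀)| < c₀` on `U`, then
`λ = -exp(-(C/2)(ψ - ψ(x₀)))` satisfies `-e^{C c₀/2} < λ < 0` and
`i∂∂̄λ ≥ (C e^{-C c₀/2}/4) i∂∂̄ψ` on `U`. -/
theorem stmt1 {E : Type*} [NormedAddCommGroup E] [NormedSpace ℂ E]
    (U : Set E) (hU : IsOpen U) (ψ : E → ℝ) (hψ : ContDiff ℝ (⊤ : ℕ∞) ψ)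
    (C c₀ : ℝ) (hC : 0 < C) (hc₀ : 0 < c₀)
    (hlevi : ∀ x ∈ U, ∀ v : E, C * ‖delOne ψ x v‖ ^ 2 ≤ levi ψ x v)
    (x₀ : E) (hx₀ : x₀ ∈ U)
    (hbd : ∀ x ∈ U, |ψ x - ψ x₀| < c₀)
    (lam : E → ℝ) (hlam : lam = fun x => -Real.exp (-(C / 2) * (ψ x - ψ x₀))) :
    (∀ x ∈ U, -Real.exp (C * c₀ / 2) < lam x ∧ lam x < 0) ∧
    (∀ x ∈ U, ∀ v : E, (C * Real.exp (-(C * c₀) / 2) / 4) * levi ψ x v ≤ levi lam x v) := by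
  subst hlam
  set a : ℝ := -(C / 2) with ha
  set k : ℝ := ψ x₀ with hk
  constructor
  · intro x hx
    have hb := hbd x hx
    rw [abs_lt] at hb
    constructor
    · have : a * (ψ x - k) < C * c₀ / 2 := by
        rw [ha]; nlinarith [hb.1]
      have := Real.exp_lt_exp.mpr this
      simp only [neg_lt_neg_iff]
      linarith
    · simp [Real.exp_pos]
  · intro x hx v
    have hb := hbd x hx
    rw [abs_lt] at hb
    set e := Real.exp (a * (ψ x - k)) with he
    have hepos : 0 < e := Real.exp_pos _
    have he1 : Real.exp (-(C * c₀) / 2) ≤ e := by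
      rw [he]
      apply Real.exp_le_exp.mpr
      rw [ha]
      nlinarith [hb.2]
    have hQ := hlevi x hx v
    have hQ0 : (0:ℝ) ≤ ‖delOne ψ x v‖ ^ 2 := sq_nonneg _
    have hL0 : 0 ≤ levi ψ x v := le_trans (by positivity) hQ
    have h1 := secondDeriv_lamAux ψ hψ a k x v
    have h2 := secondDeriv_lamAux ψ hψ a k x (Complex.I • v)
    have key : levi (fun z => -Real.exp (a * (ψ z - k))) x v
        = e * (C / 2) * levi ψ x v - e * (C ^ 2 / 4) * ‖delOne ψ x v‖ ^ 2 := by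
      rw [levi, h1, h2, levi, norm_delOne_sq, ha, ← he]
      ring
    rw [key]
    nlinarith [mul_le_mul_of_nonneg_left hQ (by positivity : (0:ℝ) ≤ e * C / 4),
      mul_le_mul_of_nonneg_right he1 hL0, Real.exp_pos (-(C * c₀) / 2)]
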